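/- arXiv:1508.00542 — 2 statements merged into one kernel-verified Lean document; each statement's English description precedes it below -/
import Mathlib

section
/- Let Π be a partition of the finite vertex set V and let S be a connected loopless graph on the classes of Π that contains exactly one cycle, and suppose this cycle has odd length. If G and G' are realizations of the same degree sequence d : V → ℕ and both are weakly consistent with S, then for every pair of classes P, Q adjacent in S, e_G(P, Q) = e_{G'}(P, Q). -/
open SimpleGraph

variable {V : Type*}

/-- Degree of `v` in `G`, via `Set.ncard`. -/
noncomputable def gdeg (G : SimpleGraph V) (v : V) : ℕ := (G.neighborSet v).ncard

/-- `G` realizes the degree sequence `d`. -/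
def IsRealization (G : SimpleGraph V) (d : V → ℕ) : Prop := ∀ v, gdeg G v = d v

/-- Number of crossing edges of `G` w.r.t. the bipartition `(U, W)`. -/
noncomputable def crossCount (U W : Set V) (G : SimpleGraph V) : ℕ :=
  {e ∈ G.edgeSet | ∃ u ∈ U, ∃ w ∈ W, e = s(u, w)}.ncard

/-- Number of edges of `G` with one endpoint in `P` and the other in `Q`. -/
noncomputable def eCount (G : SimpleGraph V) (P Q : Set V) : ℕ :=
  {e ∈ G.edgeSet | ∃ p ∈ P, ∃ q ∈ Q, e = s(p, q)}.ncard

/-- `r(G, G')`, the number of edges of `G` that are not edges of `G'`. -/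
noncomputable def rdist (G G' : SimpleGraph V) : ℕ := (G.edgeSet \ G'.edgeSet).ncard

/-- `G'` is obtained from `G` by a swap all of whose four vertices lie in `A`. -/
def IsSwapWithin (A : Set V) (G G' : SimpleGraph V) : Prop :=
  ∃ a b c d : V, a ∈ A ∧ b ∈ A ∧ c ∈ A ∧ d ∈ A ∧
    a ≠ b ∧ a ≠ c ∧ a ≠ d ∧ b ≠ c ∧ b ≠ d ∧ c ≠ d ∧
    G.Adj a b ∧ G.Adj c d ∧ ¬ G.Adj b c ∧ ¬ G.Adj a d ∧
    G'.edgeSet = (G.edgeSet \ {s(a, b), s(c, d)}) ∪ {s(b, c), s(a, d)}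

/-- `G'` is obtained from `G` by a swap. -/
def IsSwap (G G' : SimpleGraph V) : Prop := IsSwapWithin Set.univ G G'

/-- `G'` is obtained from `G` by a double swap (two simultaneous disjoint swaps). -/
def IsDoubleSwap (G G' : SimpleGraph V) : Prop :=
  ∃ a b c d e f g h : V,
    List.Pairwise (· ≠ ·) [a, b, c, d, e, f, g, h] ∧
    G.Adj a b ∧ G.Adj c d ∧ G.Adj e f ∧ G.Adj g h ∧
    ¬ G.Adj b c ∧ ¬ G.Adj a d ∧ ¬ G.Adj f g ∧ ¬ G.Adj e h ∧
    G'.edgeSet = (G.edgeSet \ {s(a, b), s(c, d), s(e, f), s(g, h)}) ∪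
      {s(b, c), s(a, d), s(f, g), s(e, h)}

/-- The `i`-th edge of the closed walk whose vertices are listed (cyclically) by `c`. -/
def stepEdge (c : List V) (i : Fin c.length) : Sym2 V :=
  s(c.get i, c.get ⟨(i.val + 1) % c.length, Nat.mod_lt _ i.pos⟩)

/-- The set of edges of the closed walk listed by `c`. -/
def circuitEdges (c : List V) : Set (Sym2 V) := Set.range (stepEdge c)

/-- The vertex list `c` describes an alternating circuit of the pair `(G, G')`:
a closed walk of even positive length, with pairwise distinct edges, whose edges lie
alternately in `E(G) \ E(G')` and `E(G') \ E(G)`, visiting no vertex more than twice. -/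
def IsAltCircuit (G G' : SimpleGraph V) (c : List V) : Prop :=
  0 < c.length ∧ Even c.length ∧
  (∀ i j : Fin c.length, stepEdge c i = stepEdge c j → i = j) ∧
  (∀ i : Fin c.length, i.val % 2 = 0 → stepEdge c i ∈ G.edgeSet \ G'.edgeSet) ∧
  (∀ i : Fin c.length, i.val % 2 = 1 → stepEdge c i ∈ G'.edgeSet \ G.edgeSet) ∧
  (∀ v : V, {i : Fin c.length | c.get i = v}.ncard ≤ 2)

/-- A decomposition of `E(G) △ E(G')` into (edge sets of) alternating circuits. -/
def IsAltCircuitDecomp (G G' : SimpleGraph V) (𝒞 : Finset (List V)) : Prop :=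
  (∀ c ∈ 𝒞, IsAltCircuit G G' c) ∧
  (∀ c ∈ 𝒞, ∀ c' ∈ 𝒞, c ≠ c' → Disjoint (circuitEdges c) (circuitEdges c')) ∧
  (⋃ c ∈ 𝒞, circuitEdges c) = symmDiff G.edgeSet G'.edgeSet

/-- Number of edges of `G` whose endpoints have classes `P` and `Q` under `π`. -/
noncomputable def wcount {C : Type*} (π : V → C) (G : SimpleGraph V) (P Q : C) : ℕ :=
  {e ∈ G.edgeSet | ∃ x y : V, e = s(x, y) ∧ π x = P ∧ π y = Q}.ncard

/-- Sum of the degree sequence over a class. -/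
noncomputable def Dsum (d : V → ℕ) (U : Set V) : ℕ := ∑ᶠ v ∈ U, d v

/-- `G` is weakly consistent with the cycle skeleton on the classes `U 0, …, U (n-1)`. -/
def WeaklyCycleConsistent (n : ℕ) [NeZero n] (U : Fin n → Set V) (G : SimpleGraph V) : Prop :=
  ∀ e ∈ G.edgeSet, ∃ (i : Fin n) (x y : V), e = s(x, y) ∧ x ∈ U i ∧ y ∈ U (i + 1)

/-- `G` is weakly consistent with the skeleton graph `S` on the classes `U`. -/
def WeaklyConsistent {C : Type*} (U : C → Set V) (S : SimpleGraph C) (G : SimpleGraph V) : Prop :=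
  ∀ e ∈ G.edgeSet, ∃ (P Q : C) (x y : V), S.Adj P Q ∧ e = s(x, y) ∧ x ∈ U P ∧ y ∈ U Q

/-- `G'` is obtained from `G` by an `F`-swap all of whose vertices lie in `A`:
the edges and non-chord-restricted non-edges are exchanged along an alternating
circuit of chords `c` in which every parity-crossing non-circuit pair is forbidden. -/
def IsFSwapWithin (A : Set V) (F : Set (Sym2 V)) (G G' : SimpleGraph V) : Prop :=
  ∃ c : List V, (∀ v ∈ c, v ∈ A) ∧ 0 < c.length ∧ Even c.length ∧
    (∀ i j : Fin c.length, stepEdge c i = stepEdge c j → i = j) ∧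
    (∀ i : Fin c.length, i.val % 2 = 0 → stepEdge c i ∈ G.edgeSet) ∧
    (∀ i : Fin c.length, i.val % 2 = 1 → stepEdge c i ∉ G.edgeSet ∧ stepEdge c i ∉ F) ∧
    (∀ i j : Fin c.length, i.val % 2 ≠ j.val % 2 → c.get i ≠ c.get j →
      s(c.get i, c.get j) ∉ circuitEdges c → s(c.get i, c.get j) ∈ F) ∧
    G'.edgeSet = (G.edgeSet \ {e | ∃ i : Fin c.length, i.val % 2 = 0 ∧ e = stepEdge c i}) ∪
      {e | ∃ i : Fin c.length, i.val % 2 = 1 ∧ e = stepEdge c i}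

/-!
Collapse each class of the partition to a point. For a weakly consistent realization `H`, the
number `w_H(PQ)` of edges of `H` between the classes `P` and `Q` is a weighting of the edges of
the skeleton `S` whose sum around each class `R` is `∑_{v ∈ R} d v`, because no edge of `H` lies
inside a class. So `w_G - w_{G'}` is a weighting of the edges of `S` with zero sum at every vertex.
Having as many edges as vertices, the connected graph `S` is not a tree, so it has a cycle, which
is odd. For a connected graph with an odd closed walk, the map sending a vertex weighting `x` to
the edge weighting `ab ↦ x a + x b` is injective (`x` alternates in sign along walks); when the
graph has as many edges as vertices it is therefore a bijection, and so is its transpose, which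
sends an edge weighting to its vertex sums. Hence `w_G = w_{G'}`.
-/

open Finset Matrix Function

theorem Matrix.mulVec_injective_of_transpose {m n K : Type*} [Field K] [Fintype m] [Fintype n]
    {A : Matrix m n K} (hcard : Fintype.card m = Fintype.card n)
    (h : Injective Aᵀ.mulVec) : Injective A.mulVec := by
  have hrank : A.rank = Fintype.card m := by
    rw [← Matrix.rank_transpose, Matrix.rank,
      LinearMap.finrank_range_of_inj (f := Aᵀ.mulVecLin) h, Module.finrank_fintype_fun_eq_card]
  have hsurj : Surjective A.mulVecLin := by
    rw [← LinearMap.range_eq_top]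
    apply Submodule.eq_top_of_finrank_eq
    rw [← Matrix.rank, hrank, Module.finrank_fintype_fun_eq_card]
  exact (LinearMap.injective_iff_surjective_of_finrank_eq_finrank (by
    simp only [Module.finrank_fintype_fun_eq_card, hcard])).mpr hsurj

namespace SimpleGraph

variable {C : Type*} {S : SimpleGraph C}

theorem Walk.apply_eq_neg_one_pow_mul {K : Type*} [Ring K] {x : C → K}
    (hx : ∀ a b, S.Adj a b → x a + x b = 0) {u v : C} (p : S.Walk u v) :
    x v = (-1) ^ p.length * x u := by
  induction p with
  | nil => simp
  | @cons a b c h p ih =>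
    rw [Walk.length_cons, ih, pow_succ, mul_assoc, neg_one_mul,
      eq_neg_of_add_eq_zero_right (hx a b h)]

theorem Connected.eq_zero_of_forall_adj_add_eq_zero {K : Type*} [Ring K] [NoZeroDivisors K]
    [NeZero (2 : K)] (hconn : S.Connected) (hodd : ∃ (v : C) (w : S.Walk v v), Odd w.length)
    {x : C → K} (hx : ∀ a b, S.Adj a b → x a + x b = 0) : x = 0 := by
  obtain ⟨v, w, hw⟩ := hodd
  have hv : x v = 0 := by
    have h := w.apply_eq_neg_one_pow_mul hx
    rw [hw.neg_one_pow, neg_one_mul, eq_neg_iff_add_eq_zero, ← two_mul] at h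
    exact (mul_eq_zero.mp h).resolve_left two_ne_zero
  funext u
  rw [(hconn.preconnected v u).some.apply_eq_neg_one_pow_mul hx, hv, mul_zero, Pi.zero_apply]

theorem Connected.exists_isCycle_of_ncard_edgeSet_eq [Finite C] (hconn : S.Connected)
    (hcard : S.edgeSet.ncard = Nat.card C) : ∃ (v : C) (c : S.Walk v v), c.IsCycle := by
  by_contra! hacyclic
  have htree := (isTree_iff_connected_and_card.mp ⟨hconn, hacyclic⟩).2
  rw [Nat.card_coe_set_eq, hcard] at htree
  omega

variable [Fintype C] [DecidableEq C] [DecidableRel S.Adj]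

theorem sum_incMatrix_mul_of_adj {K : Type*} [Semiring K] {a b : C} (h : S.Adj a b) (x : C → K) :
    ∑ P, S.incMatrix K P s(a, b) * x P = x a + x b := by
  simp_rw [incMatrix_apply', ite_mul, one_mul, zero_mul, mk'_mem_incidenceSet_iff, h, true_and]
  have hpair : ∀ y, (y = a ∨ y = b) ↔ y ∈ ({a, b} : Finset C) := by simp
  simp_rw [hpair, Finset.sum_ite_mem, Finset.univ_inter, Finset.sum_pair h.ne]

theorem sum_incMatrix_mul_eq_sum_incidenceFinset {K : Type*} [Semiring K] (P : C)
    (g : Sym2 C → K) :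
    ∑ e : S.edgeSet, S.incMatrix K P e * g e = ∑ e ∈ S.incidenceFinset P, g e := by
  simp only [incMatrix_apply', ite_mul, one_mul, zero_mul]
  rw [Finset.sum_set_coe (f := fun e => if e ∈ S.incidenceSet P then g e else 0),
    ← Finset.sum_filter]
  congr 1
  ext e
  simp only [Finset.mem_filter, Set.mem_toFinset, mem_incidenceFinset, incidenceSet,
    Set.mem_sep_iff]
  tauto

theorem Connected.eq_zero_of_forall_sum_incidenceFinset_eq_zero {K : Type*} [Field K]
    [NeZero (2 : K)] (hconn : S.Connected) (hodd : ∃ (v : C) (w : S.Walk v v), Odd w.length)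
    (hcard : Fintype.card S.edgeSet = Fintype.card C) {g : Sym2 C → K}
    (hg : ∀ P, ∑ e ∈ S.incidenceFinset P, g e = 0) {e : Sym2 C} (he : e ∈ S.edgeSet) :
    g e = 0 := by
  let M : Matrix C S.edgeSet K := fun P e => S.incMatrix K P e
  have hinj : Injective M.mulVec := by
    refine Matrix.mulVec_injective_of_transpose hcard.symm ?_
    refine (injective_iff_map_eq_zero Mᵀ.mulVecLin).mpr fun x hx => ?_
    refine hconn.eq_zero_of_forall_adj_add_eq_zero hodd fun a b hab => ?_
    exact (sum_incMatrix_mul_of_adj hab x).symm.trans (congrFun hx ⟨s(a, b), hab⟩)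
  have hMg : M *ᵥ (fun e => g e) = 0 := funext fun P =>
    (sum_incMatrix_mul_eq_sum_incidenceFinset P g).trans (hg P)
  exact congrFun (hinj (hMg.trans (Matrix.mulVec_zero M).symm)) ⟨e, he⟩

theorem Hom.sum_incidenceFinset_card_fiber [Fintype V] [DecidableEq V]
    {H : SimpleGraph V} [DecidableRel H.Adj] (f : H →g S) (R : C) :
    ∑ ε ∈ S.incidenceFinset R, #{e ∈ H.edgeFinset | e.map f = ε}
      = ∑ v with f v = R, H.degree v := by
  have hdisj : (({v | f v = R} : Finset V) : Set V).PairwiseDisjoint (H.incidenceFinset ·) := by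
    intro v hv v' hv' hne
    have hnadj : ¬ H.Adj v v' := fun h => S.irrefl (v := R) <| by
      simpa [(mem_filter.mp hv).2, (mem_filter.mp hv').2] using f.map_adj h
    rw [Function.onFun, ← disjoint_coe, coe_incidenceFinset, coe_incidenceFinset,
      Set.disjoint_iff_inter_eq_empty]
    exact H.incidenceSet_inter_incidenceSet_of_not_adj hnadj hne
  simp_rw [sum_card_fiberwise_eq_card_filter, ← card_incidenceFinset_eq_degree]
  rw [← card_biUnion hdisj]
  congr 1
  ext e
  induction e with
  | _ x y =>
    simp only [mem_filter, mem_edgeFinset, mem_incidenceFinset, mem_biUnion, mem_univ, true_and,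
      incidenceSet, Set.mem_ofPred_eq, mem_edgeSet, Sym2.map_mk, Sym2.mem_iff]
    constructor
    · rintro ⟨h, -, rfl | rfl⟩
      exacts [⟨x, rfl, h, .inl rfl⟩, ⟨y, rfl, h, .inr rfl⟩]
    · rintro ⟨a, rfl, h, rfl | rfl⟩
      exacts [⟨h, f.map_adj h, .inl rfl⟩, ⟨h, f.map_adj h, .inr rfl⟩]

end SimpleGraph

theorem IsRealization.degree_eq {G : SimpleGraph V} {d : V → ℕ} (hG : IsRealization G d)
    (v : V) [Fintype (G.neighborSet v)] : G.degree v = d v := by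
  rw [← hG v, gdeg, ← card_neighborSet_eq_degree, Set.ncard_eq_toFinset_card',
    Set.toFinset_card]

section Classes

variable {C : Type*}

theorem exists_eq_preimage_singleton {U : C → Set V} (hdis : Pairwise (Disjoint on U))
    (hcov : ⋃ P, U P = Set.univ) : ∃ π : V → C, U = fun P => π ⁻¹' {P} := by
  have hmem (v : V) : ∃ P, v ∈ U P := Set.mem_iUnion.mp (hcov ▸ Set.mem_univ v)
  choose π hπ using hmem
  refine ⟨π, funext fun P => Set.ext fun v => ⟨fun hv => ?_, fun hv => hv ▸ hπ v⟩⟩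
  by_contra hne
  exact Set.disjoint_left.mp (hdis hne) (hπ v) hv

theorem WeaklyConsistent.map_adj {π : V → C} {S : SimpleGraph C} {H : SimpleGraph V}
    (hH : WeaklyConsistent (fun P => π ⁻¹' {P}) S H) {x y : V} (hxy : H.Adj x y) :
    S.Adj (π x) (π y) := by
  obtain ⟨P, Q, a, b, hPQ, hab, rfl, rfl⟩ := hH s(x, y) hxy
  rcases Sym2.eq_iff.mp hab with ⟨rfl, rfl⟩ | ⟨rfl, rfl⟩
  exacts [hPQ, hPQ.symm]

theorem eCount_preimage_singleton [Fintype V] [DecidableEq C] (π : V → C) (H : SimpleGraph V)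
    [Fintype H.edgeSet] (P Q : C) :
    eCount H (π ⁻¹' {P}) (π ⁻¹' {Q}) = #{e ∈ H.edgeFinset | e.map π = s(P, Q)} := by
  rw [eCount, ← Set.ncard_coe_finset]
  congr 1
  ext e
  induction e with
  | _ x y =>
    simp only [Set.mem_preimage, Set.mem_singleton_iff, coe_filter, mem_edgeFinset,
      Set.mem_ofPred_eq, Sym2.map_mk]
    refine and_congr_right fun _ => ⟨?_, fun h => ?_⟩
    · rintro ⟨p, rfl, q, rfl, hpq⟩
      rcases Sym2.eq_iff.mp hpq with ⟨rfl, rfl⟩ | ⟨rfl, rfl⟩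
      exacts [rfl, Sym2.eq_swap]
    · rcases Sym2.eq_iff.mp h with ⟨rfl, rfl⟩ | ⟨rfl, rfl⟩
      exacts [⟨x, rfl, y, rfl, rfl⟩, ⟨y, rfl, x, rfl, Sym2.eq_swap⟩]

end Classes

/-- For a connected skeleton with exactly one cycle, the cycle being odd, any two weakly
consistent realizations of the same degree sequence have the same number of edges on every
bone. -/
theorem odd_unicyclic_unique_weight {V : Type*} {C : Type*} [Fintype V] [Fintype C]
    (U : C → Set V)
    (hdis : ∀ P Q : C, P ≠ Q → Disjoint (U P) (U Q))
    (hcov : (⋃ P, U P) = Set.univ)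
    (S : SimpleGraph C) (hconn : S.Connected)
    (hcount : S.edgeSet.ncard = Fintype.card C)
    (hodd : ∀ (x : C) (w : S.Walk x x), w.IsCycle → Odd w.length)
    (d : V → ℕ) (G G' : SimpleGraph V)
    (hG : IsRealization G d) (hG' : IsRealization G' d)
    (hwG : WeaklyConsistent U S G) (hwG' : WeaklyConsistent U S G')
    (P Q : C) (hPQ : S.Adj P Q) :
    eCount G (U P) (U Q) = eCount G' (U P) (U Q) := by
  classical
  obtain ⟨π, rfl⟩ := exists_eq_preimage_singleton (fun P Q => hdis P Q) hcov
  obtain ⟨v, c, hc⟩ :=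
    hconn.exists_isCycle_of_ncard_edgeSet_eq (by rwa [Nat.card_eq_fintype_card])
  let f : G →g S := ⟨π, hwG.map_adj⟩
  let f' : G' →g S := ⟨π, hwG'.map_adj⟩
  have hbalanced : ∀ R, ∑ ε ∈ S.incidenceFinset R,
      ((#{e ∈ G.edgeFinset | e.map π = ε} : ℚ) - #{e ∈ G'.edgeFinset | e.map π = ε}) = 0 := by
    intro R
    rw [sum_sub_distrib, sub_eq_zero]
    exact_mod_cast (f.sum_incidenceFinset_card_fiber R).trans <|
      (sum_congr rfl fun u _ => (hG.degree_eq u).trans (hG'.degree_eq u).symm).trans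
        (f'.sum_incidenceFinset_card_fiber R).symm
  have hcard : Fintype.card S.edgeSet = Fintype.card C := by
    rwa [← Nat.card_eq_fintype_card, Nat.card_coe_set_eq]
  have hPQ' := hconn.eq_zero_of_forall_sum_incidenceFinset_eq_zero (K := ℚ)
    ⟨v, c, hodd v c hc⟩ hcard hbalanced (S.mem_edgeSet.mpr hPQ)
  rw [eCount_preimage_singleton, eCount_preimage_singleton]
  exact_mod_cast sub_eq_zero.mp hPQ'
end

section
/- Fix a bipartition of the finite vertex set V into two disjoint parts U and W, and let G and G' be realizations of the same degree sequence d : V → ℕ whose symmetric difference E(G) △ E(G') is the edge set of a single alternating circuit C all of whose vertices lie in U. Then there exists a sequence of graphs G = G_0, G_1, …, G_t = G' such that each G_{i+1} is obtained from G_i by a swap all four of whose vertices lie in U; consequently every G_i is a realization of d with ε(G_i) = ε(G). -/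
open SimpleGraph

variable {V : Type*}

/-
A swap inside `U` only changes pairs with both ends in `U`, so it preserves all degrees and every
crossing edge. Since `E(G) △ E(G')` is spanned by vertices of `U`, the graphs `G` and `G'` agree on
every pair not inside `U`, and the claim follows from a relative form of the classical fact that
swaps connect all realizations of a degree sequence: two graphs with the same degrees that agree
outside a finite set `A` are connected by swaps inside `A`.

This is proved by induction on `A`. Pick `v ∈ A` and a set `T ⊆ A \ {v}` of `|N(v) ∩ A|` vertices
of largest degree into `A`. Whenever `w ∈ N(v) \ T` and `x ∈ T \ N(v)`, the choice of `T` gives a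
neighbour `y` of `x` that is not a neighbour of `w`, and the swap `wv, xy ↦ vx, wy` moves
`N(v) ∩ A` one step towards `T`. Once both graphs have `N(v) ∩ A = T`, they agree outside
`A \ {v}`.
-/

open Relation

namespace Relation.ReflTransGen

variable {α β : Type*} {r : α → α → Prop} {a b : α}

lemma apply_eq (f : α → β) (hf : ∀ x y, r x y → f x = f y) (h : ReflTransGen r a b) :
    f a = f b := by
  induction h with
  | refl => rfl
  | tail _ hstep ih => exact ih.trans (hf _ _ hstep)

lemma exists_seq (h : ReflTransGen r a b) :
    ∃ (t : ℕ) (f : ℕ → α), f 0 = a ∧ f t = b ∧ (∀ i < t, r (f i) (f (i + 1))) ∧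
      ∀ i ≤ t, ReflTransGen r a (f i) := by
  induction h with
  | refl => exact ⟨0, fun _ => a, rfl, rfl, by simp, fun _ _ => .refl⟩
  | @tail c b _ hcb ih =>
    obtain ⟨t, f, h0, ht, hstep, hreach⟩ := ih
    refine ⟨t + 1, fun i => if i ≤ t then f i else b, by simp [h0], by simp, ?_, ?_⟩
    · intro i hi
      rcases Nat.lt_succ_iff_lt_or_eq.mp hi with hi | rfl
      · simpa [hi.le, Nat.succ_le_of_lt hi] using hstep i hi
      · simpa [ht] using hcb
    · intro i hi
      rcases Nat.le_succ_iff.mp hi with hi | rfl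
      · simpa [hi] using hreach i hi
      · simpa using (hreach t le_rfl).tail (ht ▸ hcb)

end Relation.ReflTransGen

lemma Set.Finite.exists_top_subset {α : Type*} (f : α → ℕ) {s : Set α} (hs : s.Finite)
    {n : ℕ} (hn : n ≤ s.ncard) :
    ∃ T ⊆ s, T.ncard = n ∧ ∀ x ∈ T, ∀ w ∈ s \ T, f w ≤ f x := by
  induction n with
  | zero => exact ⟨∅, Set.empty_subset s, Set.ncard_empty _, by simp⟩
  | succ n ih =>
    obtain ⟨T, hTs, hTn, hT⟩ := ih (by omega)
    have hne : (s \ T).Nonempty := by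
      rw [Set.sdiff_nonempty]
      intro hsT
      have := Set.ncard_le_ncard hsT (hs.subset hTs)
      omega
    obtain ⟨m, hm, hmax⟩ := Set.exists_max_image (s \ T) f (hs.sdiff) hne
    refine ⟨insert m T, Set.insert_subset hm.1 hTs, ?_, ?_⟩
    · rw [Set.ncard_insert_of_notMem hm.2 (hs.subset hTs), hTn]
    · rintro x (rfl | hxT) w ⟨hws, hwT⟩ <;> rw [Set.mem_insert_iff, not_or] at hwT
      · exact hmax w ⟨hws, hwT.2⟩
      · exact hT x hxT w ⟨hws, hwT.2⟩

section Swaps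

variable {H H' K : SimpleGraph V} {A : Set V}

section IsSwapAt

variable {a b c d : V}

structure IsSwapAt (H H' : SimpleGraph V) (a b c d : V) : Prop where
  adj_ab : H.Adj a b
  adj_cd : H.Adj c d
  not_adj_bc : ¬ H.Adj b c
  not_adj_ad : ¬ H.Adj a d
  ne_ac : a ≠ c
  ne_bd : b ≠ d
  ne_bc : b ≠ c
  ne_ad : a ≠ d
  edgeSet_eq : H'.edgeSet = (H.edgeSet \ {s(a, b), s(c, d)}) ∪ {s(b, c), s(a, d)}

lemma isSwapWithin_iff :
    IsSwapWithin A H H' ↔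
      ∃ a b c d, a ∈ A ∧ b ∈ A ∧ c ∈ A ∧ d ∈ A ∧ IsSwapAt H H' a b c d := by
  constructor
  · rintro ⟨a, b, c, d, ha, hb, hc, hd, -, hac, had, hbc, hbd, -, hab', hcd', hbc', had', hE⟩
    exact ⟨a, b, c, d, ha, hb, hc, hd, ⟨hab', hcd', hbc', had', hac, hbd, hbc, had, hE⟩⟩
  · rintro ⟨a, b, c, d, ha, hb, hc, hd, h⟩
    exact ⟨a, b, c, d, ha, hb, hc, hd, h.adj_ab.ne, h.ne_ac, h.ne_ad, h.ne_bc, h.ne_bd,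
      h.adj_cd.ne, h.adj_ab, h.adj_cd, h.not_adj_bc, h.not_adj_ad, h.edgeSet_eq⟩

lemma exists_isSwapAt (hab : H.Adj a b) (hcd : H.Adj c d) (hbc : ¬ H.Adj b c)
    (had : ¬ H.Adj a d) (hac : a ≠ c) (hbd : b ≠ d) (hbc' : b ≠ c) (had' : a ≠ d) :
    ∃ H', IsSwapAt H H' a b c d := by
  refine ⟨fromEdgeSet ((H.edgeSet \ {s(a, b), s(c, d)}) ∪ {s(b, c), s(a, d)}),
    hab, hcd, hbc, had, hac, hbd, hbc', had', ?_⟩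
  rw [edgeSet_fromEdgeSet, sdiff_eq_self_iff_disjoint, Set.disjoint_left]
  rintro e hdiag (⟨he, -⟩ | rfl | rfl)
  · exact not_isDiag_of_mem_edgeSet H he hdiag
  · exact hbc' (Sym2.mk_isDiag_iff.mp hdiag)
  · exact had' (Sym2.mk_isDiag_iff.mp hdiag)

namespace IsSwapAt

lemma adj_iff (h : IsSwapAt H H' a b c d) {u w : V} :
    H'.Adj u w ↔ (H.Adj u w ∧ s(u, w) ≠ s(a, b) ∧ s(u, w) ≠ s(c, d)) ∨
      s(u, w) = s(b, c) ∨ s(u, w) = s(a, d) := by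
  rw [← mem_edgeSet, h.edgeSet_eq]
  simp only [Set.mem_union, Set.mem_sdiff, mem_edgeSet, Set.mem_insert_iff,
    Set.mem_singleton_iff, not_or]

lemma flip (h : IsSwapAt H H' a b c d) : IsSwapAt H H' b a d c where
  adj_ab := h.adj_ab.symm
  adj_cd := h.adj_cd.symm
  not_adj_bc := h.not_adj_ad
  not_adj_ad := h.not_adj_bc
  ne_ac := h.ne_bd
  ne_bd := h.ne_ac
  ne_bc := h.ne_ad
  ne_ad := h.ne_bc
  edgeSet_eq := by
    rw [h.edgeSet_eq, Sym2.eq_swap (a := a), Sym2.eq_swap (a := c), Sym2.eq_swap (a := b),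
      Sym2.eq_swap (a := a) (b := d), Set.pair_comm (s(d, a))]

lemma rotate (h : IsSwapAt H H' a b c d) : IsSwapAt H H' c d a b where
  adj_ab := h.adj_cd
  adj_cd := h.adj_ab
  not_adj_bc := fun h' => h.not_adj_ad h'.symm
  not_adj_ad := fun h' => h.not_adj_bc h'.symm
  ne_ac := h.ne_ac.symm
  ne_bd := h.ne_bd.symm
  ne_bc := h.ne_ad.symm
  ne_ad := h.ne_bc.symm
  edgeSet_eq := by
    rw [h.edgeSet_eq, Set.pair_comm (s(a, b)), Set.pair_comm (s(b, c)),
      Sym2.eq_swap (a := a) (b := d), Sym2.eq_swap (a := b) (b := c)]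

lemma symm (h : IsSwapAt H H' a b c d) : IsSwapAt H' H b c d a := by
  have hab : s(a, b) ∈ H.edgeSet := h.adj_ab
  have hcd : s(c, d) ∈ H.edgeSet := h.adj_cd
  have hbc : s(b, c) ∉ H.edgeSet := h.not_adj_bc
  have had : s(a, d) ∉ H.edgeSet := h.not_adj_ad
  have := h.ne_ac
  have := h.ne_bd
  refine ⟨?_, ?_, ?_, ?_, h.ne_bd, h.ne_ac.symm, h.adj_cd.ne, h.adj_ab.ne.symm, ?_⟩
  · simp [← mem_edgeSet, h.edgeSet_eq]
  · simp [← mem_edgeSet, h.edgeSet_eq, Sym2.eq_swap]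
  · simp [← mem_edgeSet, h.edgeSet_eq]
    grind
  · simp [← mem_edgeSet, h.edgeSet_eq]
    grind
  · ext e
    simp only [h.edgeSet_eq, Set.mem_union, Set.mem_sdiff, Set.mem_insert_iff,
      Set.mem_singleton_iff]
    grind [Sym2.eq_swap]

lemma neighborSet_fst (h : IsSwapAt H H' a b c d) :
    H'.neighborSet a = insert d (H.neighborSet a \ {b}) := by
  have := h.adj_ab.ne
  have := h.ne_ac
  have := h.ne_ad
  ext y
  simp only [mem_neighborSet, h.adj_iff, Set.mem_insert_iff, Set.mem_sdiff,
    Set.mem_singleton_iff, Sym2.eq_iff]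
  grind

lemma neighborSet_of_ne (h : IsSwapAt H H' a b c d) {z : V}
    (hza : z ≠ a) (hzb : z ≠ b) (hzc : z ≠ c) (hzd : z ≠ d) :
    H'.neighborSet z = H.neighborSet z := by
  ext y
  simp only [mem_neighborSet, h.adj_iff, Sym2.eq_iff]
  grind

lemma ncard_neighborSet_inter_fst (h : IsSwapAt H H' a b c d)
    (hb : b ∈ A) (hd : d ∈ A) :
    (H'.neighborSet a ∩ A).ncard = (H.neighborSet a ∩ A).ncard := by
  rw [h.neighborSet_fst, Set.insert_inter_of_mem hd, Set.sdiff_inter_right_comm]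
  exact Set.ncard_exchange (fun hd' => h.not_adj_ad hd'.1) ⟨h.adj_ab, hb⟩

lemma ncard_neighborSet_inter (h : IsSwapAt H H' a b c d)
    (ha : a ∈ A) (hb : b ∈ A) (hc : c ∈ A) (hd : d ∈ A) (z : V) :
    (H'.neighborSet z ∩ A).ncard = (H.neighborSet z ∩ A).ncard := by
  by_cases hza : z = a
  · exact hza ▸ h.ncard_neighborSet_inter_fst hb hd
  by_cases hzb : z = b
  · exact hzb ▸ h.flip.ncard_neighborSet_inter_fst ha hc
  by_cases hzc : z = c
  · exact hzc ▸ h.rotate.ncard_neighborSet_inter_fst hd hb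
  by_cases hzd : z = d
  · exact hzd ▸ h.rotate.flip.ncard_neighborSet_inter_fst hc ha
  rw [h.neighborSet_of_ne hza hzb hzc hzd]

lemma adj_iff_of_notMem (h : IsSwapAt H H' a b c d)
    (ha : a ∈ A) (hb : b ∈ A) (hc : c ∈ A) (hd : d ∈ A) {u w : V} (huw : u ∉ A ∨ w ∉ A) :
    H'.Adj u w ↔ H.Adj u w := by
  simp only [h.adj_iff, Sym2.eq_iff]
  grind

end IsSwapAt

end IsSwapAt

namespace IsSwapWithin

lemma symm (h : IsSwapWithin A H H') : IsSwapWithin A H' H := by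
  obtain ⟨a, b, c, d, ha, hb, hc, hd, h⟩ := isSwapWithin_iff.mp h
  exact isSwapWithin_iff.mpr ⟨b, c, d, a, hb, hc, hd, ha, h.symm⟩

instance : Std.Symm (IsSwapWithin (V := V) A) := ⟨fun _ _ => symm⟩

lemma mono {B : Set V} (hAB : A ⊆ B) (h : IsSwapWithin A H H') : IsSwapWithin B H H' := by
  obtain ⟨a, b, c, d, ha, hb, hc, hd, h⟩ := isSwapWithin_iff.mp h
  exact isSwapWithin_iff.mpr ⟨a, b, c, d, hAB ha, hAB hb, hAB hc, hAB hd, h⟩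

lemma ncard_neighborSet_inter (h : IsSwapWithin A H H') (z : V) :
    (H'.neighborSet z ∩ A).ncard = (H.neighborSet z ∩ A).ncard := by
  obtain ⟨a, b, c, d, ha, hb, hc, hd, h⟩ := isSwapWithin_iff.mp h
  exact h.ncard_neighborSet_inter ha hb hc hd z

lemma gdeg_eq (h : IsSwapWithin A H H') (z : V) : gdeg H' z = gdeg H z := by
  simpa [gdeg] using (h.mono (Set.subset_univ A)).ncard_neighborSet_inter z

lemma adj_iff_of_notMem (h : IsSwapWithin A H H') {u w : V} (huw : u ∉ A ∨ w ∉ A) :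
    H'.Adj u w ↔ H.Adj u w := by
  obtain ⟨a, b, c, d, ha, hb, hc, hd, h⟩ := isSwapWithin_iff.mp h
  exact h.adj_iff_of_notMem ha hb hc hd huw

lemma crossCount_eq {U W : Set V} (hUW : Disjoint U W) (h : IsSwapWithin U H H') :
    crossCount U W H' = crossCount U W H := by
  unfold crossCount
  congr 1
  ext e
  simp only [Set.mem_ofPred_eq]
  constructor
  all_goals
    rintro ⟨he, u, hu, w, hw, rfl⟩
    exact ⟨by simpa [h.adj_iff_of_notMem (Or.inr (hUW.notMem_of_mem_right hw))] using he,
      u, hu, w, hw, rfl⟩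

end IsSwapWithin

abbrev SwapReachable (A : Set V) : SimpleGraph V → SimpleGraph V → Prop :=
  ReflTransGen (IsSwapWithin A)

namespace SwapReachable

lemma mono {B : Set V} (hAB : A ⊆ B) (h : SwapReachable A H K) : SwapReachable B H K :=
  ReflTransGen.mono (fun _ _ hs => hs.mono hAB) _ _ h

lemma gdeg_eq (h : SwapReachable A H K) (z : V) : gdeg H z = gdeg K z :=
  h.apply_eq (gdeg · z) fun _ _ hs => (hs.gdeg_eq z).symm

lemma adj_iff (h : SwapReachable A H K) {u w : V} (huw : u ∉ A ∨ w ∉ A) :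
    H.Adj u w ↔ K.Adj u w :=
  Iff.of_eq <| h.apply_eq (·.Adj u w) fun _ _ hs => propext (hs.adj_iff_of_notMem huw).symm

lemma crossCount_eq {U W : Set V} (hUW : Disjoint U W) (h : SwapReachable U H K) :
    crossCount U W H = crossCount U W K :=
  h.apply_eq (crossCount U W) fun _ _ hs => (hs.crossCount_eq hUW).symm

end SwapReachable

lemma adj_iff_of_neighborSet_inter_eq {v : V}
    (hagree : ∀ u w, (u ∉ A ∨ w ∉ A) → (H.Adj u w ↔ K.Adj u w))
    (hv : H.neighborSet v ∩ A = K.neighborSet v ∩ A) {u w : V}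
    (huw : u ∉ A \ {v} ∨ w ∉ A \ {v}) : H.Adj u w ↔ K.Adj u w := by
  by_cases hout : u ∉ A ∨ w ∉ A
  · exact hagree u w hout
  simp only [not_or, not_not] at hout
  have hvw : ∀ w ∈ A, H.Adj v w ↔ K.Adj v w := fun w hw => by
    simpa [hw] using Set.ext_iff.mp hv w
  rcases huw with hu | hw
  · obtain rfl : u = v := by simpa [hout.1] using hu
    exact hvw w hout.2
  · obtain rfl : w = v := by simpa [hout.2] using hw
    rw [H.adj_comm, K.adj_comm]
    exact hvw u hout.1

section Finite

variable [Finite V]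

lemma exists_adj_not_adj_of_ncard_le {v w x : V} (hv : v ∈ A) (hw : w ∈ A) (hx : x ∈ A)
    (hvw : H.Adj v w) (hvx : ¬ H.Adj v x) (hxv : x ≠ v)
    (hdeg : (H.neighborSet w ∩ A).ncard ≤ (H.neighborSet x ∩ A).ncard) :
    ∃ y ∈ A, y ≠ w ∧ H.Adj x y ∧ ¬ H.Adj w y := by
  by_contra! hcon
  have hsub : insert v ((H.neighborSet x ∩ A) \ {w}) ⊆ (H.neighborSet w ∩ A) \ {x} := by
    rintro y (rfl | ⟨⟨hxy, hy⟩, hyw⟩)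
    · exact ⟨⟨hvw.symm, hv⟩, hxv.symm⟩
    · exact ⟨⟨hcon y hy hyw hxy, hy⟩, hxy.ne.symm⟩
  have hle := Set.ncard_le_ncard hsub
  rw [Set.ncard_insert_of_notMem fun h => hvx h.1.1.symm] at hle
  by_cases hxw : H.Adj x w
  · rw [Set.ncard_sdiff_singleton_of_mem (show w ∈ H.neighborSet x ∩ A from ⟨hxw, hw⟩),
      Set.ncard_sdiff_singleton_of_mem (show x ∈ H.neighborSet w ∩ A from ⟨hxw.symm, hx⟩)]
      at hle
    omega
  · rw [Set.sdiff_singleton_eq_self fun h => hxw h.1,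
      Set.sdiff_singleton_eq_self fun h => hxw h.1.symm] at hle
    omega

lemma exists_isSwapWithin_neighborSet_inter_eq {v w x : V} (hv : v ∈ A)
    (hw : w ∈ H.neighborSet v ∩ A) (hx : x ∈ A) (hvx : ¬ H.Adj v x) (hxv : x ≠ v) (hxw : x ≠ w)
    (hdeg : (H.neighborSet w ∩ A).ncard ≤ (H.neighborSet x ∩ A).ncard) :
    ∃ H', IsSwapWithin A H H' ∧
      H'.neighborSet v ∩ A = insert x ((H.neighborSet v ∩ A) \ {w}) := by
  obtain ⟨y, hy, hyw, hxy, hwy⟩ := exists_adj_not_adj_of_ncard_le hv hw.2 hx hw.1 hvx hxv hdeg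
  have hyv : y ≠ v := by
    rintro rfl
    exact hvx hxy.symm
  obtain ⟨H', hswap⟩ :=
    exists_isSwapAt hw.1.symm hxy hvx hwy hxw.symm hyv.symm hxv.symm hyw.symm
  refine ⟨H', isSwapWithin_iff.mpr ⟨w, v, x, y, hw.2, hv, hx, hy, hswap⟩, ?_⟩
  rw [hswap.flip.neighborSet_fst, Set.insert_inter_of_mem hx, Set.sdiff_inter_right_comm]

lemma exists_swapReachable_neighborSet_inter_eq {v : V} {T : Set V} (hv : v ∈ A)
    (hT : T ⊆ A \ {v}) (hcard : (H.neighborSet v ∩ A).ncard = T.ncard)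
    (htop : ∀ x ∈ T, ∀ w ∈ (A \ {v}) \ T,
      (H.neighborSet w ∩ A).ncard ≤ (H.neighborSet x ∩ A).ncard) :
    ∃ H', SwapReachable A H H' ∧ H'.neighborSet v ∩ A = T := by
  induction hn : ((H.neighborSet v ∩ A) \ T).ncard generalizing H with
  | zero =>
    refine ⟨H, .refl, Set.eq_of_subset_of_ncard_le ?_ hcard.ge⟩
    rwa [Set.ncard_eq_zero, Set.sdiff_eq_empty] at hn
  | succ n ih =>
    obtain ⟨w, hwN, hwT⟩ := Set.nonempty_of_ncard_ne_zero (s := (H.neighborSet v ∩ A) \ T)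
      (by omega)
    obtain ⟨x, hxT, hxN⟩ : (T \ (H.neighborSet v ∩ A)).Nonempty := by
      rw [Set.sdiff_nonempty]
      intro hTN
      exact hwT (Set.eq_of_subset_of_ncard_le hTN hcard.le ▸ hwN)
    obtain ⟨hxA, hxv⟩ := hT hxT
    obtain ⟨H₁, hswap, hN⟩ := exists_isSwapWithin_neighborSet_inter_eq hv hwN hxA
      (fun h => hxN ⟨h, hxA⟩) hxv (ne_of_mem_of_not_mem hxT hwT)
      (htop x hxT w ⟨⟨hwN.2, hwN.1.ne'⟩, hwT⟩)
    obtain ⟨H', hreach, hH'⟩ := ih (H := H₁)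
      (by rw [hN, Set.ncard_exchange hxN hwN, hcard])
      (by simpa only [hswap.ncard_neighborSet_inter] using htop)
      (by rw [hN, Set.insert_sdiff_of_mem _ hxT, Set.sdiff_sdiff_comm,
        Set.ncard_sdiff_singleton_of_mem (show w ∈ (H.neighborSet v ∩ A) \ T from ⟨hwN, hwT⟩),
        hn, Nat.add_sub_cancel])
    exact ⟨H', hreach.head hswap, hH'⟩

lemma ncard_neighborSet_inter_eq_of_gdeg_eq (hdeg : ∀ z, gdeg H z = gdeg K z)
    (hagree : ∀ u w, (u ∉ A ∨ w ∉ A) → (H.Adj u w ↔ K.Adj u w)) (z : V) :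
    (H.neighborSet z ∩ A).ncard = (K.neighborSet z ∩ A).ncard := by
  have hout : H.neighborSet z \ A = K.neighborSet z \ A := by
    ext y
    simp only [Set.mem_sdiff, mem_neighborSet]
    exact and_congr_left fun hy => hagree z y (Or.inr hy)
  have hH := Set.ncard_inter_add_ncard_sdiff_eq_ncard (H.neighborSet z) A
  have hK := Set.ncard_inter_add_ncard_sdiff_eq_ncard (K.neighborSet z) A
  have hdz : (H.neighborSet z).ncard = (K.neighborSet z).ncard := hdeg z
  rw [hout] at hH
  omega

theorem swapReachable_of_gdeg_eq (A : Set V) {H K : SimpleGraph V}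
    (hdeg : ∀ z, gdeg H z = gdeg K z)
    (hagree : ∀ u w, (u ∉ A ∨ w ∉ A) → (H.Adj u w ↔ K.Adj u w)) :
    SwapReachable A H K := by
  induction A, A.toFinite using Set.Finite.induction_on generalizing H K with
  | empty =>
    obtain rfl : H = K := by
      ext u w
      exact hagree u w (Or.inl id)
    exact .refl
  | @insert v s hvs _ ih =>
    have hv : v ∈ insert v s := Set.mem_insert v s
    have hs : insert v s \ {v} = s := Set.insert_sdiff_self_of_notMem hvs
    have hdegA := ncard_neighborSet_inter_eq_of_gdeg_eq hdeg hagree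
    have hNs : H.neighborSet v ∩ insert v s ⊆ insert v s \ {v} := fun y ⟨hy, hyA⟩ =>
      ⟨hyA, fun hyv => H.loopless.irrefl v (hyv ▸ hy)⟩
    obtain ⟨T, hTs, hTcard, htop⟩ := (Set.toFinite _).exists_top_subset
      (fun z => (H.neighborSet z ∩ insert v s).ncard) (Set.ncard_le_ncard hNs)
    obtain ⟨H₁, hH, hH₁⟩ := exists_swapReachable_neighborSet_inter_eq hv hTs hTcard.symm htop
    obtain ⟨K₁, hK, hK₁⟩ := exists_swapReachable_neighborSet_inter_eq hv hTs
      (by rw [← hdegA, hTcard]) (by simpa only [hdegA] using htop)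
    have hagree₁ : ∀ u w, (u ∉ insert v s ∨ w ∉ insert v s) → (H₁.Adj u w ↔ K₁.Adj u w) :=
      fun u w huw => (hH.adj_iff huw).symm.trans ((hagree u w huw).trans (hK.adj_iff huw))
    have hdeg₁ : ∀ z, gdeg H₁ z = gdeg K₁ z := fun z =>
      (hH.gdeg_eq z).symm.trans ((hdeg z).trans (hK.gdeg_eq z))
    have hsub := ih hdeg₁ fun u w huw =>
      adj_iff_of_neighborSet_inter_eq hagree₁ (hH₁.trans hK₁.symm) (by rwa [hs])
    exact hH.trans ((hsub.mono (Set.subset_insert v s)).trans (symm hK))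

end Finite

end Swaps

lemma mem_of_mem_circuitEdges {c : List V} {e : Sym2 V} (he : e ∈ circuitEdges c) {x : V}
    (hx : x ∈ e) : x ∈ c := by
  obtain ⟨i, rfl⟩ := he
  rcases Sym2.mem_iff.mp hx with rfl | rfl <;> exact List.get_mem _ _

lemma adj_iff_of_symmDiff_edgeSet_subset {G G' : SimpleGraph V} {A : Set V}
    (hA : ∀ e ∈ symmDiff G.edgeSet G'.edgeSet, ∀ x ∈ e, x ∈ A) {u w : V}
    (huw : u ∉ A ∨ w ∉ A) : G.Adj u w ↔ G'.Adj u w := by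
  by_contra hne
  have he : s(u, w) ∈ symmDiff G.edgeSet G'.edgeSet := by
    rw [Set.mem_symmDiff, mem_edgeSet, mem_edgeSet]
    tauto
  rcases huw with hu | hw
  · exact hu (hA _ he u (Sym2.mem_mk_left u w))
  · exact hw (hA _ he w (Sym2.mem_mk_right u w))

theorem circuit_within_class_swaps_general {V : Type*} [Fintype V] (U W : Set V)
    (hUW : Disjoint U W) (d : V → ℕ)
    (G G' : SimpleGraph V) (hG : IsRealization G d) (hG' : IsRealization G' d)
    (c : List V) (hcU : ∀ v ∈ c, v ∈ U)
    (hsd : symmDiff G.edgeSet G'.edgeSet = circuitEdges c) :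
    ∃ (t : ℕ) (f : ℕ → SimpleGraph V), f 0 = G ∧ f t = G' ∧
      (∀ i < t, IsSwapWithin U (f i) (f (i + 1))) ∧
      (∀ i ≤ t, IsRealization (f i) d ∧ crossCount U W (f i) = crossCount U W G) := by
  have hagree : ∀ u w, (u ∉ U ∨ w ∉ U) → (G.Adj u w ↔ G'.Adj u w) := fun _ _ =>
    adj_iff_of_symmDiff_edgeSet_subset fun e he x hx =>
      hcU x (mem_of_mem_circuitEdges (hsd ▸ he) hx)
  have hreach := swapReachable_of_gdeg_eq U (fun z => (hG z).trans (hG' z).symm) hagree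
  obtain ⟨t, f, h0, ht, hstep, hreach⟩ := hreach.exists_seq
  exact ⟨t, f, h0, ht, hstep, fun i hi =>
    ⟨fun z => (SwapReachable.gdeg_eq (hreach i hi) z).symm.trans (hG z),
      (SwapReachable.crossCount_eq hUW (hreach i hi)).symm⟩⟩

/-- If the symmetric difference of two realizations is a single alternating circuit lying
entirely inside the class `U`, then one can be transformed into the other by swaps whose four
vertices all lie in `U`; all intermediate graphs are realizations with the same number of
crossing edges. -/
theorem circuit_within_class_swaps {V : Type*} [Fintype V] (U W : Set V)
    (hUW : Disjoint U W) (hcov : U ∪ W = Set.univ) (d : V → ℕ)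
    (G G' : SimpleGraph V) (hG : IsRealization G d) (hG' : IsRealization G' d)
    (c : List V) (hc : IsAltCircuit G G' c) (hcU : ∀ v ∈ c, v ∈ U)
    (hsd : symmDiff G.edgeSet G'.edgeSet = circuitEdges c) :
    ∃ (t : ℕ) (f : ℕ → SimpleGraph V), f 0 = G ∧ f t = G' ∧
      (∀ i < t, IsSwapWithin U (f i) (f (i + 1))) ∧
      (∀ i ≤ t, IsRealization (f i) d ∧ crossCount U W (f i) = crossCount U W G) :=
  circuit_within_class_swaps_general U W hUW d G G' hG hG' c hcU hsd
end
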